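/- arXiv:2309.05970 — 4 statements merged into one kernel-verified Lean document; each statement's English description precedes it below -/
import Mathlib

section
/- Let q be an element of a field and for 1 ≤ i ≤ n−1 define the Demazure–Lusztig operator T_i acting on rational functions h(x_1,…,x_n) by T_i·h = q·h − ((x_i − q·x_{i+1})/(x_i − x_{i+1}))·(h − s_i·h), where s_i swaps the variables x_i and x_{i+1}. Then T_i satisfies the quadratic Hecke relation (T_i − q)(T_i + 1) = 0, i.e. for every rational function h one has T_i(T_i h) = (q−1)·T_i h + q·h. -/
/-!
Write `T h = q h - c (h - s h)` with `c = (x_i - q x_{i+1}) / (x_i - x_{i+1})`. Since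
`c + s c = 1 + q`, the operator `T` reverses the sign of the anti-invariant part:
`T h - s (T h) = -(h - s h)`. Hence `T (T h) = q T h + c (h - s h) = q T h + (q h - T h)`.
-/

section DemazureLusztig

variable {R : Type*} [CommRing R] (s : R →+* R) (q c : R)

def demazureLusztig (h : R) : R := q * h - c * (h - s h)

variable {s q c}

theorem demazureLusztig_sub_map (hs : Function.Involutive s) (hq : s q = q)
    (hc : c + s c = 1 + q) (h : R) :
    demazureLusztig s q c h - s (demazureLusztig s q c h) = -(h - s h) := by
  have hsc : s c = 1 + q - c := eq_sub_of_add_eq' hc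
  simp only [demazureLusztig, map_sub, map_mul, hs h, hq, hsc]
  ring

theorem demazureLusztig_demazureLusztig (hs : Function.Involutive s) (hq : s q = q)
    (hc : c + s c = 1 + q) (h : R) :
    demazureLusztig s q c (demazureLusztig s q c h) =
      (q - 1) * demazureLusztig s q c h + q * h := by
  have hanti := demazureLusztig_sub_map hs hq hc h
  calc demazureLusztig s q c (demazureLusztig s q c h)
      = q * demazureLusztig s q c h + c * (h - s h) := by
        rw [demazureLusztig, hanti]; ring
    _ = (q - 1) * demazureLusztig s q c h + q * h := by
        rw [demazureLusztig]; ring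

end DemazureLusztig

theorem add_map_div_sub_of_swap {K : Type*} [Field K] {s : K →+* K} {q x y : K}
    (hxy : x ≠ y) (hq : s q = q) (hx : s x = y) (hy : s y = x) :
    (x - q * y) / (x - y) + s ((x - q * y) / (x - y)) = 1 + q := by
  have hxy' : x - y ≠ 0 := sub_ne_zero.mpr hxy
  have hyx' : y - x ≠ 0 := sub_ne_zero.mpr hxy.symm
  rw [map_div₀, map_sub, map_sub, map_mul, hq, hx, hy]
  field_simp
  ring

/-- The Demazure–Lusztig operator
`T h = q*h - ((x_i - q x_{i+1})/(x_i - x_{i+1}))*(h - s h)` acting on the field of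
rational functions (modelled as an abstract field `K` equipped with the variables
`xi = x_i`, `xi1 = x_{i+1}` and the involutive field homomorphism `s` swapping them
and fixing `q`) satisfies the quadratic Hecke relation `(T - q)(T + 1) = 0`, i.e.
`T (T h) = (q - 1) * T h + q * h` for every rational function `h`. -/
theorem demazure_lusztig_quadratic {K : Type*} [Field K]
    (q xi xi1 : K) (hx : xi ≠ xi1)
    (s : K →+* K) (hs : Function.Involutive s)
    (hsq : s q = q) (hs1 : s xi = xi1) (hs2 : s xi1 = xi)
    (T : K → K)
    (hT : ∀ h : K, T h = q * h - (xi - q * xi1) / (xi - xi1) * (h - s h)) :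
    ∀ h : K, T (T h) = (q - 1) * T h + q * h := by
  obtain rfl : T = demazureLusztig s q ((xi - q * xi1) / (xi - xi1)) := funext hT
  exact demazureLusztig_demazureLusztig hs hsq (add_map_div_sub_of_swap hx hsq hs1 hs2)
end

section
/- The Demazure–Lusztig operators T_i = q − ((x_i − q x_{i+1})/(x_i − x_{i+1}))(1 − s_i), 1 ≤ i ≤ n−1, satisfy the braid relation T_i T_{i+1} T_i = T_{i+1} T_i T_{i+1} as operators on rational functions in x_1,…,x_n, for all 1 ≤ i ≤ n−2. -/
/-!
Write `T_σ h = q h - a (h - σ h)`. Expanding both sides of the braid relation for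
`T_1 = T_s` with coefficient `a₁₂` and `T_2 = T_t` with coefficient `a₂₃`, the terms in `s`, `t`
are moved past the coefficients using how `s`, `t` permute the three coefficients
`a_{ij} = (x_i - q x_j) / (x_i - x_j)` (`a_{ji} = 1 + q - a_{ij}`), and `s t s = t s t`
matches the top-degree terms. What remains is a multiple of the single rational identity
`a₁₂ a₁₃ + a₂₃ a₁₃ + q = a₁₂ a₂₃ + a₁₃ + q a₁₃`.
-/

namespace DemazureLusztig

def coeff {K : Type*} [Field K] (q a b : K) : K := (a - q * b) / (a - b)

def op {R : Type*} [CommRing R] (q a : R) (σ : R →+* R) (h : R) : R := q * h - a * (h - σ h)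

section Coeff

variable {K : Type*} [Field K]

theorem map_coeff (σ : K →+* K) {q : K} (hσq : σ q = q) (a b : K) :
    σ (coeff q a b) = coeff q (σ a) (σ b) := by
  simp only [coeff, map_div₀, map_sub, map_mul, hσq]

theorem coeff_swap (q : K) {a b : K} (hab : a ≠ b) : coeff q b a = 1 + q - coeff q a b := by
  have hab' : a - b ≠ 0 := sub_ne_zero.mpr hab
  have hba' : b - a ≠ 0 := sub_ne_zero.mpr hab.symm
  unfold coeff
  field_simp
  ring

theorem coeff_triple (q : K) {a b c : K} (hab : a ≠ b) (hbc : b ≠ c) (hac : a ≠ c) :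
    coeff q a b * coeff q a c + coeff q b c * coeff q a c + q =
      coeff q a b * coeff q b c + coeff q a c + q * coeff q a c := by
  have hab' : a - b ≠ 0 := sub_ne_zero.mpr hab
  have hbc' : b - c ≠ 0 := sub_ne_zero.mpr hbc
  have hac' : a - c ≠ 0 := sub_ne_zero.mpr hac
  unfold coeff
  field_simp
  ring

end Coeff

theorem op_braid {R : Type*} [CommRing R] {q a₁ a₂ a₃ : R} {s t : R →+* R}
    (hsq : s q = q) (htq : t q = q)
    (hsa₁ : s a₁ = 1 + q - a₁) (hsa₂ : s a₂ = a₃) (hsa₃ : s a₃ = a₂)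
    (hta₁ : t a₁ = a₃) (hta₂ : t a₂ = 1 + q - a₂) (hta₃ : t a₃ = a₁)
    (hrel : a₁ * a₃ + a₂ * a₃ + q = a₁ * a₂ + a₃ + q * a₃)
    {h : R} (hssh : s (s h) = h) (htth : t (t h) = h) (hbraid : s (t (s h)) = t (s (t h))) :
    op q a₁ s (op q a₂ t (op q a₁ s h)) = op q a₂ t (op q a₁ s (op q a₂ t h)) := by
  simp only [op, map_sub, map_mul, hsq, htq, hsa₁, hsa₂, hsa₃, hta₁, hta₂, hta₃,
    hssh, htth, hbraid]
  linear_combination (a₁ * (h - s h) - a₂ * (h - t h)) * hrel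

end DemazureLusztig

open DemazureLusztig in
/-- Braid relation `T_i T_{i+1} T_i = T_{i+1} T_i T_{i+1}` for the
Demazure–Lusztig operators. We model the field of rational functions in
`x_1, …, x_n` as an abstract field `K` containing the three (pairwise distinct)
relevant variables `x1 = x_i`, `x2 = x_{i+1}`, `x3 = x_{i+2}`, equipped with the
involutive field homomorphisms `s = s_i` (swapping `x1, x2`, fixing `x3` and `q`)
and `t = s_{i+1}` (swapping `x2, x3`, fixing `x1` and `q`), which satisfy the braid
relation `s t s = t s t`.  Then `T1 (T2 (T1 h)) = T2 (T1 (T2 h))` for all `h`. -/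
theorem demazure_lusztig_braid {K : Type*} [Field K]
    (q x1 x2 x3 : K) (h12 : x1 ≠ x2) (h23 : x2 ≠ x3) (h13 : x1 ≠ x3)
    (s t : K →+* K) (hs : Function.Involutive s) (ht : Function.Involutive t)
    (hsq : s q = q) (htq : t q = q)
    (hs1 : s x1 = x2) (hs2 : s x2 = x1) (hs3 : s x3 = x3)
    (ht1 : t x1 = x1) (ht2 : t x2 = x3) (ht3 : t x3 = x2)
    (hbraid : ∀ y : K, s (t (s y)) = t (s (t y)))
    (T1 T2 : K → K)
    (hT1 : ∀ h : K, T1 h = q * h - (x1 - q * x2) / (x1 - x2) * (h - s h))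
    (hT2 : ∀ h : K, T2 h = q * h - (x2 - q * x3) / (x2 - x3) * (h - t h)) :
    ∀ h : K, T1 (T2 (T1 h)) = T2 (T1 (T2 h)) := by
  intro h
  have hT1 : T1 = op q (coeff q x1 x2) s := funext hT1
  have hT2 : T2 = op q (coeff q x2 x3) t := funext hT2
  subst hT1 hT2
  refine op_braid hsq htq ?_ ?_ ?_ ?_ ?_ ?_ (coeff_triple q h12 h23 h13) (hs h) (ht h) (hbraid h)
  · rw [map_coeff s hsq, hs1, hs2, coeff_swap q h12]
  · rw [map_coeff s hsq, hs2, hs3]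
  · rw [map_coeff s hsq, hs1, hs3]
  · rw [map_coeff t htq, ht1, ht2]
  · rw [map_coeff t htq, ht2, ht3, coeff_swap q h23]
  · rw [map_coeff t htq, ht1, ht3]
end

section
/- For every integer m ≥ 1 and real numbers x_1,…,x_m, the following Gaussian integral evaluation holds: (1/(2π))^m · i^{m(m−1)/2} · ∫_{ℝ^m} ∏_{1 ≤ i < j ≤ m} (u_j − u_i) · ∏_{k=1}^m e^{−i x_k u_k − u_k²/2} du_1⋯du_m = (1/(2π))^{m/2} · ∏_{k=1}^m e^{−x_k²/2} · ∏_{1 ≤ i < j ≤ m} (x_j − x_i). -/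
/-!
Expanding the Vandermonde determinant and integrating term by term (Fubini), the integral of
`det (u_i ^ j) * ∏ w_i (u_i)` is the determinant of the one-dimensional moments
`∫ t ^ j w_i(t) dt`. For `w_i(t) = exp (-i x_i t - t² / 2)` these are derivatives of the Fourier
transform of the Gaussian: `∫ t ^ j w_i(t) dt = (-i) ^ j √(2π) He_j(x_i) exp (-x_i² / 2)`.
So the moment matrix is `(He_j(x_i))` rescaled by diagonal matrices, and since `He_j` is monic
of degree `j`, column reduction turns `det (He_j(x_i))` into the Vandermonde determinant.
-/

open MeasureTheory Complex Polynomial Finset Matrix Real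
open scoped FourierTransform

lemma integrable_pow_mul_cexp_gaussian (n : ℕ) (a : ℝ) :
    Integrable fun t : ℝ => (t : ℂ) ^ n * cexp (-(I * a * t) - t ^ 2 / 2) := by
  have h := (integrable_rpow_mul_exp_neg_mul_sq (b := 1 / 2) (by norm_num)
    (by linarith [n.cast_nonneg (α := ℝ)] : (-1 : ℝ) < n)).norm
  refine h.mono' (by fun_prop : Continuous _).aestronglyMeasurable
    (.of_forall fun t => le_of_eq ?_)
  simp [norm_exp, ← ofReal_pow, Real.rpow_natCast, div_eq_inv_mul]

lemma iteratedDeriv_ofReal_comp {f : ℝ → ℝ} {n : ℕ} (hf : ContDiff ℝ n f) (x : ℝ) :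
    iteratedDeriv n (fun y => (f y : ℂ)) x = iteratedDeriv n f x := by
  have := ofRealCLM.iteratedFDeriv_comp_left hf.contDiffAt (x := x) le_rfl
  simp only [Function.comp_def, ofRealCLM_apply] at this
  simp only [iteratedDeriv, this]
  rfl

lemma iteratedDeriv_cexp_neg_sq_div_two (n : ℕ) (x : ℝ) :
    iteratedDeriv n (fun y : ℝ => cexp (-(y : ℂ) ^ 2 / 2)) x
      = (-1) ^ n * aeval (x : ℂ) (hermite n) * cexp (-(x : ℂ) ^ 2 / 2) := by
  have hφ : (fun y : ℝ => cexp (-(y : ℂ) ^ 2 / 2))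
      = fun y => ((Real.exp (-(y ^ 2 / 2)) : ℝ) : ℂ) := by
    ext y
    push_cast
    ring_nf
  rw [hφ, iteratedDeriv_ofReal_comp (by fun_prop), iteratedDeriv_eq_iterate,
    deriv_gaussian_eq_hermite_mul_gaussian, ← coe_algebraMap, aeval_algebraMap_apply]
  simp [neg_div]

lemma fourier_cexp_neg_sq_div_two :
    𝓕 (fun u : ℝ => cexp (-(u : ℂ) ^ 2 / 2))
      = fun ξ : ℝ => (√(2 * π) : ℂ) * cexp (-((2 * π * ξ : ℝ) : ℂ) ^ 2 / 2) := by
  have hb : 0 < (1 / (2 * π) : ℂ).re := by simp; positivity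
  have hsqrt : (1 / (2 * π) : ℂ) ^ (1 / 2 : ℂ) = ((√(2 * π))⁻¹ : ℝ) := by
    rw [← Real.sqrt_inv, Real.sqrt_eq_rpow, ofReal_cpow (by positivity)]
    push_cast
    ring_nf
  convert fourier_gaussian_pi hb using 1
  · ext u; field_simp
  · ext ξ
    rw [hsqrt]
    push_cast
    field_simp

lemma iteratedDeriv_fourier_cexp_neg_sq_div_two (n : ℕ) (x : ℝ) :
    iteratedDeriv n (𝓕 fun u : ℝ => cexp (-(u : ℂ) ^ 2 / 2)) (x / (2 * π))
      = (2 * π) ^ n * √(2 * π) *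
          ((-1) ^ n * aeval (x : ℂ) (hermite n) * cexp (-(x : ℂ) ^ 2 / 2)) := by
  have hsmooth : ContDiff ℝ n fun y : ℝ => cexp (-(y : ℂ) ^ 2 / 2) := by
    have : ContDiff ℝ n fun y : ℝ => (y : ℂ) := ofRealCLM.contDiff
    fun_prop
  have hscale := congrFun (iteratedDeriv_comp_const_smul hsmooth (2 * π)) (x / (2 * π))
  push_cast at hscale
  rw [fourier_cexp_neg_sq_div_two, iteratedDeriv_const_mul_field]
  push_cast
  rw [hscale, mul_div_cancel₀ _ (by positivity), iteratedDeriv_cexp_neg_sq_div_two,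
    Complex.real_smul]
  push_cast
  ring

/-- Mathlib's Fourier kernel is `exp (-2πi v ξ)`, hence the evaluation at `x / (2π)`. -/
lemma fourier_pow_smul_cexp_neg_sq_div_two (n : ℕ) (x : ℝ) :
    𝓕 (fun v : ℝ => (-2 * π * I * v) ^ n • cexp (-(v : ℂ) ^ 2 / 2)) (x / (2 * π))
      = (-2 * π * I) ^ n * ∫ t : ℝ, (t : ℂ) ^ n * cexp (-(I * x * t) - t ^ 2 / 2) := by
  rw [Real.fourier_real_eq_integral_exp_smul, ← integral_const_mul]
  congr 1 with v
  have hphase : (↑(-2 * π * v * (x / (2 * π))) * I : ℂ) = -(I * x * v) := by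
    push_cast; field_simp
  rw [smul_eq_mul, smul_eq_mul, hphase, sub_eq_add_neg, Complex.exp_add, neg_div]
  ring

theorem integral_pow_mul_cexp_gaussian (n : ℕ) (x : ℝ) :
    ∫ t : ℝ, (t : ℂ) ^ n * cexp (-(I * x * t) - t ^ 2 / 2)
      = (-I) ^ n * √(2 * π) * aeval (x : ℂ) (hermite n) * cexp (-(x : ℂ) ^ 2 / 2) := by
  have hmoments (k : ℕ) (_ : (k : ℕ∞) ≤ n) :
      Integrable fun t : ℝ => t ^ k • cexp (-(t : ℂ) ^ 2 / 2) := by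
    convert integrable_pow_mul_cexp_gaussian k 0 using 2 with t
    simp [neg_div]
  have key := congrFun (Real.iteratedDeriv_fourier hmoments le_rfl) (x / (2 * π))
  rw [iteratedDeriv_fourier_cexp_neg_sq_div_two, fourier_pow_smul_cexp_neg_sq_div_two] at key
  have hI : (-2 * π * I) ^ n * (-I) ^ n = (-1) ^ n * (2 * π : ℂ) ^ n := by
    rw [← mul_pow, ← mul_pow]
    congr 1
    linear_combination (2 * (π : ℂ)) * I_mul_I
  refine mul_left_cancel₀ (pow_ne_zero n (by simp [pi_ne_zero])) (key.symm.trans ?_)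
  linear_combination
    (-(√(2 * π) : ℂ) * aeval (x : ℂ) (hermite n) * cexp (-(x : ℂ) ^ 2 / 2)) * hI

theorem prod_filter_lt_eq_prod_prod_Ioi {α M : Type*} [Fintype α] [LinearOrder α]
    [LocallyFiniteOrderTop α] [CommMonoid M] (f : α → α → M) :
    ∏ p ∈ univ.filter (fun p : α × α => p.1 < p.2), f p.1 p.2
      = ∏ i, ∏ j ∈ Ioi i, f i j := by
  rw [prod_sigma']
  exact prod_nbij' (fun p => ⟨p.1, p.2⟩) (fun p => (p.1, p.2)) (by simp) (by simp) (by simp)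
    (by simp) (by simp)

theorem det_aeval_hermite_eq_prod_sub {R : Type*} [CommRing R] {m : ℕ} (v : Fin m → R) :
    (of fun i j : Fin m => aeval (v i) (hermite j)).det = ∏ i, ∏ j ∈ Ioi i, (v j - v i) := by
  nontriviality R
  rw [← det_vandermonde, det_eval_matrixOfPolynomials_eq_det_vandermonde v
    (fun j => (hermite j).map (Int.castRingHom R))
    (fun j => by rw [(hermite_monic _).natDegree_map, natDegree_hermite])
    (fun j => (hermite_monic _).map _)]
  simp [aeval_def, eval_map]

theorem integral_det_mul_prod_eq_det_integral {α 𝕜 ι : Type*} [RCLike 𝕜] [Fintype ι]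
    [DecidableEq ι] [MeasurableSpace α] {μ : Measure α} [SigmaFinite μ] (g w : ι → α → 𝕜)
    (hint : ∀ i j, Integrable (fun t => g j t * w i t) μ) :
    ∫ u : ι → α, (of fun i j => g j (u i)).det * ∏ i, w i (u i) ∂Measure.pi (fun _ => μ)
      = (of fun i j => ∫ t, g j t * w i t ∂μ).det := by
  have hexpand (u : ι → α) : (of fun i j => g j (u i)).det * ∏ i, w i (u i)
      = ∑ σ : Equiv.Perm ι, (Equiv.Perm.sign σ : 𝕜) * ∏ k, (g (σ⁻¹ k) (u k) * w k (u k)) := by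
    rw [det_apply', sum_mul]
    refine sum_congr rfl fun σ _ => ?_
    rw [mul_assoc, prod_mul_distrib, ← Equiv.prod_comp σ (fun k => g (σ⁻¹ k) (u k))]
    simp
  simp_rw [hexpand]
  rw [integral_finsetSum _
    fun σ _ => (Integrable.fintype_prod fun k => hint k (σ⁻¹ k)).const_mul _, det_apply']
  refine sum_congr rfl fun σ _ => ?_
  rw [integral_const_mul, integral_fintype_prod_eq_prod (fun k t => g (σ⁻¹ k) t * w k t),
    ← Equiv.prod_comp σ]
  simp

lemma det_integral_pow_mul_cexp_gaussian {m : ℕ} (x : Fin m → ℝ) :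
    (of fun i j : Fin m =>
        ∫ t : ℝ, (t : ℂ) ^ (j : ℕ) * cexp (-(I * x i * t) - t ^ 2 / 2)).det
      = (-I) ^ (m * (m - 1) / 2) * ((√(2 * π) : ℂ) ^ m * ((∏ k, cexp (-(x k : ℂ) ^ 2 / 2)) *
          (of fun i j : Fin m => (x i : ℂ) ^ (j : ℕ)).det)) := by
  simp_rw [integral_pow_mul_cexp_gaussian]
  have hfactor : (of fun i j : Fin m => (-I) ^ (j : ℕ) * √(2 * π) *
        aeval (x i : ℂ) (hermite j) * cexp (-(x i : ℂ) ^ 2 / 2))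
      = diagonal (fun i => √(2 * π) * cexp (-(x i : ℂ) ^ 2 / 2)) *
        (of fun i j : Fin m => aeval (x i : ℂ) (hermite j)) *
        diagonal (fun j : Fin m => (-I) ^ (j : ℕ)) := by
    ext i j
    simp only [of_apply, diagonal_mul, mul_diagonal]
    ring
  rw [hfactor, det_mul, det_mul, det_diagonal, det_diagonal, det_aeval_hermite_eq_prod_sub,
    ← det_vandermonde, prod_pow_eq_pow_sum, prod_mul_distrib, prod_const, card_univ,
    Fintype.card_fin, Fin.sum_univ_eq_sum_range (fun j => j), sum_range_id, vandermonde]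
  ring

lemma one_div_two_pi_mul_sqrt_two_pi :
    1 / (2 * (π : ℂ)) * √(2 * π) = (√(2 * π) : ℂ)⁻¹ := by
  have hsq : (√(2 * π) : ℂ) ^ 2 = 2 * π := by
    rw [← ofReal_pow, Real.sq_sqrt (by positivity)]
    push_cast
    ring
  have : (√(2 * π) : ℂ) ≠ 0 := ofReal_ne_zero.mpr (by positivity)
  field_simp
  exact hsq

theorem gaussian_vandermonde_integral_general (m : ℕ) (x : Fin m → ℝ) :
    (1 / (2 * (Real.pi : ℂ))) ^ m * Complex.I ^ (m * (m - 1) / 2) *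
      ∫ u : Fin m → ℝ,
        ((∏ p ∈ Finset.filter (fun p : Fin m × Fin m => p.1 < p.2) Finset.univ,
            ((u p.2 : ℂ) - (u p.1 : ℂ))) *
          ∏ k : Fin m,
            Complex.exp (-(Complex.I * (x k : ℂ) * (u k : ℂ)) - (u k : ℂ) ^ 2 / 2))
    = ((Real.sqrt (2 * Real.pi) : ℂ))⁻¹ ^ m *
        (∏ k : Fin m, Complex.exp (-(x k : ℂ) ^ 2 / 2)) *
        ∏ p ∈ Finset.filter (fun p : Fin m × Fin m => p.1 < p.2) Finset.univ,
          ((x p.2 : ℂ) - (x p.1 : ℂ)) := by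
  have hvandermonde (v : Fin m → ℝ) :
      ∏ p ∈ univ.filter (fun p : Fin m × Fin m => p.1 < p.2), ((v p.2 : ℂ) - v p.1)
        = (of fun i j : Fin m => (v i : ℂ) ^ (j : ℕ)).det := by
    rw [prod_filter_lt_eq_prod_prod_Ioi (fun i j => (v j : ℂ) - v i), ← det_vandermonde]
    rfl
  have hI : I ^ (m * (m - 1) / 2) * (-I) ^ (m * (m - 1) / 2) = 1 := by
    rw [← mul_pow, mul_neg, I_mul_I, neg_neg, one_pow]
  simp_rw [hvandermonde]
  rw [volume_pi, integral_det_mul_prod_eq_det_integral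
    (fun (j : Fin m) (t : ℝ) => (t : ℂ) ^ (j : ℕ))
    (fun (i : Fin m) (t : ℝ) => cexp (-(I * x i * t) - t ^ 2 / 2))
    fun i j => integrable_pow_mul_cexp_gaussian j (x i), det_integral_pow_mul_cexp_gaussian,
    mul_assoc, ← mul_assoc (I ^ _), hI, one_mul, ← mul_assoc, ← mul_pow,
    one_div_two_pi_mul_sqrt_two_pi, mul_assoc]

/-- the Gaussian integral evaluation
`(1/(2π))^m · i^{m(m−1)/2} · ∫_{ℝ^m} ∏_{i<j}(u_j − u_i) ∏_k e^{−i x_k u_k − u_k²/2} du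
  = (1/(2π))^{m/2} ∏_k e^{−x_k²/2} ∏_{i<j}(x_j − x_i)`. -/
theorem gaussian_vandermonde_integral (m : ℕ) (hm : 1 ≤ m) (x : Fin m → ℝ) :
    (1 / (2 * (Real.pi : ℂ))) ^ m * Complex.I ^ (m * (m - 1) / 2) *
      ∫ u : Fin m → ℝ,
        ((∏ p ∈ Finset.filter (fun p : Fin m × Fin m => p.1 < p.2) Finset.univ,
            ((u p.2 : ℂ) - (u p.1 : ℂ))) *
          ∏ k : Fin m,
            Complex.exp (-(Complex.I * (x k : ℂ) * (u k : ℂ)) - (u k : ℂ) ^ 2 / 2))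
    = ((Real.sqrt (2 * Real.pi) : ℂ))⁻¹ ^ m *
        (∏ k : Fin m, Complex.exp (-(x k : ℂ) ^ 2 / 2)) *
        ∏ p ∈ Finset.filter (fun p : Fin m × Fin m => p.1 < p.2) Finset.univ,
          ((x p.2 : ℂ) - (x p.1 : ℂ)) :=
  gaussian_vandermonde_integral_general m x
end

section
/- For every N ≥ 1, the number of interlacing triangular arrays of rank 2 and height N equals 2^N. That is, |T_N(2)| = 2^N. -/
/-!
Place entry `(i, j)` of row `k` at the integer position `i * N + j`. For each value `a`, the
positions of `a` in row `k + 1` interlace those in row `k`, and row `k + 1` has one more copy of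
`a`. Counting copies of `a` to the left of a point, interlacing bounds row `k + 1` against row `k`
up to one; as there are only two values and both rows have a fixed number of entries left of each
point, the bounds are attained. This forces row `k` to be row `k + 1` with its two middle entries
removed, and those two entries differ since no entry of row `k` separates them. So an array is
determined by its diagonal entries `T^{(1)}_{m,m}`, and each of them can be chosen freely.
-/

/-- The horizontal coordinate `c(i,j,k) = i·N + j − (N+k)/2` of the entry
`T^{(i)}_{j,k}` of a triangular array of height `N`. -/
def hCoord (N i j k : ℕ) : ℚ := (i * N + j : ℚ) - (N + k : ℚ) / 2

/-- `f : ℕ → ℕ → ℕ → ℕ`, with `f i j k` the entry `T^{(i)}_{j,k}` (for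
`1 ≤ i ≤ n`, `1 ≤ j ≤ k ≤ N`; `f` vanishes outside this range), is an
interlacing triangular array of rank `n` and height `N`:
(a) in row `k`, each value `a ∈ {1,…,n}` appears exactly `k` times;
(b) equal values in row `k` interlace with an equal value in row `k−1`,
with respect to the horizontal coordinates `hCoord`. -/
def IsITA (n N : ℕ) (f : ℕ → ℕ → ℕ → ℕ) : Prop :=
  (∀ i j k, (1 ≤ i ∧ i ≤ n ∧ 1 ≤ j ∧ j ≤ k ∧ k ≤ N) → 1 ≤ f i j k ∧ f i j k ≤ n) ∧
  (∀ i j k, ¬(1 ≤ i ∧ i ≤ n ∧ 1 ≤ j ∧ j ≤ k ∧ k ≤ N) → f i j k = 0) ∧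
  (∀ k, 1 ≤ k → k ≤ N → ∀ a, 1 ≤ a → a ≤ n →
    ((Finset.Icc 1 n ×ˢ Finset.Icc 1 k).filter (fun p : ℕ × ℕ => f p.1 p.2 k = a)).card
      = k) ∧
  (∀ k, 1 < k → k ≤ N → ∀ i j i' j',
    1 ≤ i → i ≤ n → 1 ≤ j → j ≤ k → 1 ≤ i' → i' ≤ n → 1 ≤ j' → j' ≤ k →
    f i j k = f i' j' k → hCoord N i j k < hCoord N i' j' k →
    ∃ i'' j'', 1 ≤ i'' ∧ i'' ≤ n ∧ 1 ≤ j'' ∧ j'' ≤ k - 1 ∧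
      f i'' j'' (k - 1) = f i j k ∧
      hCoord N i j k < hCoord N i'' j'' (k - 1) ∧
      hCoord N i'' j'' (k - 1) < hCoord N i' j' k)

open Finset

def Interlaces {α : Type*} [LinearOrder α] (A B : Finset α) : Prop :=
  ∀ p ∈ A, ∀ p' ∈ A, p < p' → ∃ q ∈ B, p ≤ q ∧ q < p'

theorem Interlaces.mono_left {α : Type*} [LinearOrder α] {A A' B : Finset α}
    (H : Interlaces A B) (hA : A' ⊆ A) : Interlaces A' B :=
  fun p hp p' hp' => H p (hA hp) p' (hA hp')

theorem Interlaces.card_le_card_filter_add_one {α : Type*} [LinearOrder α] {A B : Finset α}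
    (H : Interlaces A B) {x y : α} (hA : ∀ p ∈ A, x ≤ p ∧ p ≤ y) :
    #A ≤ #{q ∈ B | x ≤ q ∧ q < y} + 1 := by
  induction A using Finset.induction_on_max generalizing y with
  | empty => simp
  | insert M A hlt ih =>
    have hMA : M ∉ A := fun h => lt_irrefl M (hlt M h)
    rw [card_insert_of_notMem hMA]
    rcases A.eq_empty_or_nonempty with rfl | hne
    · simp
    set p := A.max' hne
    have hpA : p ∈ A := A.max'_mem hne
    obtain ⟨q, hqB, hpq, hqM⟩ := H p (mem_insert_of_mem hpA) M (mem_insert_self M A) (hlt p hpA)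
    have hxp : x ≤ p := (hA p (mem_insert_of_mem hpA)).1
    have hMy : M ≤ y := (hA M (mem_insert_self M A)).2
    have ih' := ih (y := p) (H.mono_left (subset_insert M A))
      (fun r hr => ⟨(hA r (mem_insert_of_mem hr)).1, A.le_max' r hr⟩)
    have hsub : insert q {r ∈ B | x ≤ r ∧ r < p} ⊆ {r ∈ B | x ≤ r ∧ r < y} := by
      refine insert_subset (mem_filter.2 ⟨hqB, hxp.trans hpq, hqM.trans_le hMy⟩) ?_
      intro r hr
      simp only [mem_filter] at hr ⊢
      exact ⟨hr.1, hr.2.1, hr.2.2.trans (hpq.trans_lt (hqM.trans_le hMy))⟩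
    have hq : q ∉ {r ∈ B | x ≤ r ∧ r < p} := fun h => (mem_filter.1 h).2.2.not_ge hpq
    have := card_le_card hsub
    rw [card_insert_of_notMem hq] at this
    omega

theorem Interlaces.card_filter_lt_succ_le {A B : Finset ℕ} (H : Interlaces A B) (y : ℕ) :
    #{p ∈ A | p < y + 1} ≤ #{q ∈ B | q < y} + 1 := by
  have := (H.mono_left (filter_subset _ A)).card_le_card_filter_add_one (x := 0) (y := y)
    fun p hp => ⟨Nat.zero_le p, Nat.lt_succ_iff.1 (mem_filter.1 hp).2⟩
  simpa using this

theorem Interlaces.card_filter_lt_le {A B : Finset ℕ} (H : Interlaces A B) (hcard : #A = #B + 1)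
    (x : ℕ) : #{q ∈ B | q < x} ≤ #{p ∈ A | p < x} := by
  have hS := (H.mono_left (filter_subset (x ≤ ·) A)).card_le_card_filter_add_one
    (x := x) (y := A.sup id)
    fun p hp => ⟨(mem_filter.1 hp).2, le_sup (f := id) (mem_filter.1 hp).1⟩
  have hsub : {q ∈ B | x ≤ q ∧ q < A.sup id} ⊆ {q ∈ B | ¬q < x} := by
    intro q hq
    simp only [mem_filter, not_lt] at hq ⊢
    exact ⟨hq.1, hq.2.1⟩
  have cA := card_filter_add_card_filter_not (s := A) (· < x)
  have cB := card_filter_add_card_filter_not (s := B) (· < x)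
  simp only [not_lt] at cA cB hsub
  have := card_le_card hsub
  omega

theorem card_filter_lt_add_one (S : Finset ℕ) (x : ℕ) :
    #{p ∈ S | p < x + 1} = #{p ∈ S | p < x} + if x ∈ S then 1 else 0 := by
  have hsplit : {p ∈ S | p < x + 1} = {p ∈ S | p < x} ∪ {p ∈ S | p = x} := by
    rw [← filter_or]
    exact filter_congr fun p _ => by omega
  rw [hsplit, card_union_of_disjoint (disjoint_filter.2 fun p _ h h' => (h' ▸ h).false),
    filter_eq']
  split_ifs <;> simp

theorem mem_iff_mem_of_card_filter_lt {S T : Finset ℕ} {s t c : ℕ}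
    (h₀ : #{p ∈ S | p < s} = #{q ∈ T | q < t} + c)
    (h₁ : #{p ∈ S | p < s + 1} = #{q ∈ T | q < t + 1} + c) : s ∈ S ↔ t ∈ T := by
  rw [card_filter_lt_add_one, card_filter_lt_add_one] at h₁
  by_cases hs : s ∈ S <;> by_cases ht : t ∈ T <;> simp only [hs, ht, if_true, if_false] at h₁ <;>
    simp only [hs, ht] <;> omega

theorem hCoord_lt_hCoord_iff {N i j i' j' k : ℕ} :
    hCoord N i j k < hCoord N i' j' k ↔ i * N + j < i' * N + j' := by
  unfold hCoord
  rw [sub_lt_sub_iff_right]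
  norm_cast

theorem hCoord_succ_lt_hCoord_iff {N i j i' j' k : ℕ} :
    hCoord N i j (k + 1) < hCoord N i' j' k ↔ i * N + j ≤ i' * N + j' := by
  unfold hCoord
  push_cast
  constructor
  · intro h
    have : ((i * N + j : ℕ) : ℚ) < ((i' * N + j' + 1 : ℕ) : ℚ) := by push_cast; linarith
    exact Nat.lt_succ_iff.1 (by exact_mod_cast this)
  · intro h
    have : ((i * N + j : ℕ) : ℚ) ≤ ((i' * N + j' : ℕ) : ℚ) := by exact_mod_cast h
    push_cast at this
    linarith

theorem hCoord_lt_hCoord_succ_iff {N i j i' j' k : ℕ} :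
    hCoord N i j k < hCoord N i' j' (k + 1) ↔ i * N + j < i' * N + j' := by
  unfold hCoord
  push_cast
  constructor
  · intro h
    have : ((i * N + j : ℕ) : ℚ) < ((i' * N + j' : ℕ) : ℚ) := by push_cast; linarith
    exact_mod_cast this
  · intro h
    have : ((i * N + j + 1 : ℕ) : ℚ) ≤ ((i' * N + j' : ℕ) : ℚ) := by exact_mod_cast h
    push_cast at this
    linarith

theorem eq_and_eq_of_mul_add_eq {N i i' j j' : ℕ} (hj : 1 ≤ j ∧ j ≤ N) (hj' : 1 ≤ j' ∧ j' ≤ N)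
    (h : i * N + j = i' * N + j') : i = i' ∧ j = j' := by
  rcases lt_trichotomy i i' with hi | rfl | hi
  · have : (i + 1) * N ≤ i' * N := Nat.mul_le_mul_right N hi
    rw [add_mul, one_mul] at this
    omega
  · omega
  · have : (i' + 1) * N ≤ i * N := Nat.mul_le_mul_right N hi
    rw [add_mul, one_mul] at this
    omega

def letterPos (N : ℕ) (f : ℕ → ℕ → ℕ → ℕ) (k a : ℕ) : Finset ℕ :=
  {p ∈ Icc 1 2 ×ˢ Icc 1 k | f p.1 p.2 k = a}.image fun p => p.1 * N + p.2

def rowPos (N k : ℕ) : Finset ℕ := Icc (N + 1) (N + k) ∪ Icc (2 * N + 1) (2 * N + k)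

section RankTwo

variable {N k a : ℕ} {f : ℕ → ℕ → ℕ → ℕ}

theorem mem_letterPos {i j : ℕ} (hi : 1 ≤ i ∧ i ≤ 2) (hj : 1 ≤ j ∧ j ≤ k) (hkN : k ≤ N) :
    i * N + j ∈ letterPos N f k a ↔ f i j k = a := by
  simp only [letterPos, mem_image, mem_filter, mem_product, mem_Icc, Prod.exists]
  constructor
  · rintro ⟨i₀, j₀, ⟨⟨-, hj₀⟩, hf⟩, hpos⟩
    obtain ⟨rfl, rfl⟩ :=
      eq_and_eq_of_mul_add_eq ⟨hj₀.1, hj₀.2.trans hkN⟩ ⟨hj.1, hj.2.trans hkN⟩ hpos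
    exact hf
  · exact fun hf => ⟨i, j, ⟨⟨hi, hj⟩, hf⟩, rfl⟩

theorem mem_letterPos_left {j : ℕ} (hj : 1 ≤ j ∧ j ≤ k) (hkN : k ≤ N) :
    N + j ∈ letterPos N f k a ↔ f 1 j k = a := by
  simpa using mem_letterPos (i := 1) ⟨le_rfl, one_le_two⟩ hj hkN

theorem mem_letterPos_right {j : ℕ} (hj : 1 ≤ j ∧ j ≤ k) (hkN : k ≤ N) :
    2 * N + j ∈ letterPos N f k a ↔ f 2 j k = a :=
  mem_letterPos ⟨one_le_two, le_rfl⟩ hj hkN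

theorem card_letterPos (h : IsITA 2 N f) (hk : 1 ≤ k) (hkN : k ≤ N) (ha₁ : 1 ≤ a) (ha₂ : a ≤ 2) :
    #(letterPos N f k a) = k := by
  rw [letterPos, card_image_of_injOn, h.2.2.1 k hk hkN a ha₁ ha₂]
  rintro ⟨i, j⟩ hij ⟨i', j'⟩ hij' hpos
  simp only [coe_filter, mem_product, mem_Icc, Set.mem_ofPred_eq] at hij hij'
  obtain ⟨rfl, rfl⟩ := eq_and_eq_of_mul_add_eq ⟨hij.1.2.1, hij.1.2.2.trans hkN⟩
    ⟨hij'.1.2.1, hij'.1.2.2.trans hkN⟩ hpos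
  rfl

theorem interlaces_letterPos (h : IsITA 2 N f) (hk : 1 ≤ k) (hkN : k + 1 ≤ N) :
    Interlaces (letterPos N f (k + 1) a) (letterPos N f k a) := by
  intro p hp p' hp' hlt
  simp only [letterPos, mem_image, mem_filter, mem_product, mem_Icc, Prod.exists] at hp hp'
  obtain ⟨i, j, ⟨⟨hi, hj⟩, hf⟩, rfl⟩ := hp
  obtain ⟨i', j', ⟨⟨hi', hj'⟩, hf'⟩, rfl⟩ := hp'
  obtain ⟨i'', j'', hi''₁, hi''₂, hj''₁, hj''₂, hf'', hlo, hhi⟩ :=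
    h.2.2.2 (k + 1) (by omega) hkN i j i' j' hi.1 hi.2 hj.1 hj.2 hi'.1 hi'.2 hj'.1 hj'.2
      (hf.trans hf'.symm) (hCoord_lt_hCoord_iff.2 hlt)
  rw [Nat.add_sub_cancel] at hj''₂ hf'' hlo hhi
  exact ⟨i'' * N + j'', (mem_letterPos ⟨hi''₁, hi''₂⟩ ⟨hj''₁, hj''₂⟩ (by omega)).2 (hf''.trans hf),
    hCoord_succ_lt_hCoord_iff.1 hlo, hCoord_lt_hCoord_succ_iff.1 hhi⟩

theorem letterPos_one_union_two (h : IsITA 2 N f) (hkN : k ≤ N) :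
    letterPos N f k 1 ∪ letterPos N f k 2 = rowPos N k := by
  ext p
  rw [mem_union, rowPos, mem_union, mem_Icc, mem_Icc]
  constructor
  · rintro (hp | hp) <;>
    · simp only [letterPos, mem_image, mem_filter, mem_product, mem_Icc, Prod.exists] at hp
      obtain ⟨i, j, ⟨⟨hi, hj⟩, -⟩, rfl⟩ := hp
      rcases (by omega : i = 1 ∨ i = 2) with rfl | rfl <;> omega
  · intro hp
    obtain ⟨i, j, hi, hj, rfl⟩ : ∃ i j, (1 ≤ i ∧ i ≤ 2) ∧ (1 ≤ j ∧ j ≤ k) ∧ i * N + j = p := by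
      rcases hp with hp | hp
      · exact ⟨1, p - N, by omega, by omega, by omega⟩
      · exact ⟨2, p - 2 * N, by omega, by omega, by omega⟩
    have hv := h.1 i j k ⟨hi.1, hi.2, hj.1, hj.2, hkN⟩
    rw [mem_letterPos hi hj hkN, mem_letterPos hi hj hkN]
    omega

theorem disjoint_letterPos {b : ℕ} (hkN : k ≤ N) (hab : a ≠ b) :
    Disjoint (letterPos N f k a) (letterPos N f k b) := by
  rw [disjoint_left]
  intro p hp hp'
  simp only [letterPos, mem_image, mem_filter, mem_product, mem_Icc, Prod.exists] at hp
  obtain ⟨i, j, ⟨⟨hi, hj⟩, hf⟩, rfl⟩ := hp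
  exact hab (hf.symm.trans ((mem_letterPos hi hj hkN).1 hp'))

theorem card_filter_letterPos_add (h : IsITA 2 N f) (hkN : k ≤ N) (x : ℕ) :
    #{p ∈ letterPos N f k 1 | p < x} + #{p ∈ letterPos N f k 2 | p < x} =
      #{p ∈ rowPos N k | p < x} := by
  rw [← card_union_of_disjoint (disjoint_filter_filter (disjoint_letterPos hkN (by norm_num))),
    ← filter_union, letterPos_one_union_two h hkN]

theorem card_filter_rowPos_lt_left {j : ℕ} (hjk : j ≤ k) (hkN : k ≤ N) :
    #{p ∈ rowPos N k | p < N + j + 1} = j := by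
  have : {p ∈ rowPos N k | p < N + j + 1} = Icc (N + 1) (N + j) := by
    ext p
    simp only [rowPos, mem_filter, mem_union, mem_Icc]
    omega
  rw [this, Nat.card_Icc]
  omega

theorem card_filter_rowPos_lt_right {j : ℕ} (hjk : j ≤ k) (hkN : k ≤ N) :
    #{p ∈ rowPos N k | p < 2 * N + j + 1} = k + j := by
  have : {p ∈ rowPos N k | p < 2 * N + j + 1} =
      Icc (N + 1) (N + k) ∪ Icc (2 * N + 1) (2 * N + j) := by
    ext p
    simp only [rowPos, mem_filter, mem_union, mem_Icc]
    omega
  have hdisj : Disjoint (Icc (N + 1) (N + k)) (Icc (2 * N + 1) (2 * N + j)) :=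
    disjoint_left.2 fun p hp hp' => by simp only [mem_Icc] at hp hp'; omega
  rw [this, card_union_of_disjoint hdisj, Nat.card_Icc, Nat.card_Icc]
  omega

theorem card_filter_letterPos_lt_left (h : IsITA 2 N f) (hk : 1 ≤ k) (hkN : k + 1 ≤ N) {j : ℕ}
    (hjk : j ≤ k) (ha₁ : 1 ≤ a) (ha₂ : a ≤ 2) :
    #{p ∈ letterPos N f (k + 1) a | p < N + j + 1} = #{q ∈ letterPos N f k a | q < N + j + 1} := by
  -- Interlacing bounds each value's count one way; summed over both values the sides agree.
  have hle : ∀ b, 1 ≤ b → b ≤ 2 →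
      #{q ∈ letterPos N f k b | q < N + j + 1} ≤ #{p ∈ letterPos N f (k + 1) b | p < N + j + 1} :=
    fun b hb₁ hb₂ => (interlaces_letterPos h hk hkN).card_filter_lt_le
      (by rw [card_letterPos h hk (by omega) hb₁ hb₂, card_letterPos h (by omega) hkN hb₁ hb₂]) _
  have hrow := card_filter_letterPos_add h (k := k) (by omega) (N + j + 1)
  have hrow' := card_filter_letterPos_add h hkN (N + j + 1)
  rw [card_filter_rowPos_lt_left hjk (by omega)] at hrow
  rw [card_filter_rowPos_lt_left (by omega) hkN] at hrow'
  have := hle 1 le_rfl one_le_two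
  have := hle 2 one_le_two le_rfl
  interval_cases a <;> omega

theorem card_filter_letterPos_lt_right (h : IsITA 2 N f) (hk : 1 ≤ k) (hkN : k + 1 ≤ N) {j : ℕ}
    (hjk : j ≤ k) (ha₁ : 1 ≤ a) (ha₂ : a ≤ 2) :
    #{p ∈ letterPos N f (k + 1) a | p < 2 * N + j + 1 + 1} =
      #{q ∈ letterPos N f k a | q < 2 * N + j + 1} + 1 := by
  have hle : ∀ b, #{p ∈ letterPos N f (k + 1) b | p < 2 * N + j + 1 + 1} ≤
      #{q ∈ letterPos N f k b | q < 2 * N + j + 1} + 1 :=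
    fun b => (interlaces_letterPos h hk hkN).card_filter_lt_succ_le _
  have hrow := card_filter_letterPos_add h (k := k) (by omega) (2 * N + j + 1)
  have hrow' := card_filter_letterPos_add h hkN (2 * N + j + 1 + 1)
  have hcount := card_filter_rowPos_lt_right (j := j + 1) (by omega) hkN
  rw [show 2 * N + (j + 1) + 1 = 2 * N + j + 1 + 1 by ring] at hcount
  rw [card_filter_rowPos_lt_right hjk (by omega)] at hrow
  rw [hcount] at hrow'
  have := hle 1
  have := hle 2
  interval_cases a <;> omega

theorem left_entry_succ (h : IsITA 2 N f) (hkN : k + 1 ≤ N) {j : ℕ} (hj : 1 ≤ j) (hjk : j ≤ k) :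
    f 1 j (k + 1) = f 1 j k := by
  have hv := h.1 1 j k ⟨le_rfl, one_le_two, hj, hjk, by omega⟩
  obtain ⟨j, rfl⟩ : ∃ j', j = j' + 1 := ⟨j - 1, by omega⟩
  have hcount : ∀ i ≤ k, #{p ∈ letterPos N f (k + 1) (f 1 (j + 1) k) | p < N + i + 1} =
      #{q ∈ letterPos N f k (f 1 (j + 1) k) | q < N + i + 1} + 0 :=
    fun i hi => card_filter_letterPos_lt_left h (by omega) hkN hi hv.1 hv.2
  exact (mem_letterPos_left ⟨hj, by omega⟩ hkN).1
    ((mem_iff_mem_of_card_filter_lt (hcount j (by omega)) (hcount (j + 1) hjk)).2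
      ((mem_letterPos_left ⟨hj, hjk⟩ (by omega)).2 rfl))

theorem right_entry_succ (h : IsITA 2 N f) (hkN : k + 1 ≤ N) {j : ℕ} (hj : 1 ≤ j) (hjk : j ≤ k) :
    f 2 (j + 1) (k + 1) = f 2 j k := by
  have hv := h.1 2 j k ⟨one_le_two, le_rfl, hj, hjk, by omega⟩
  obtain ⟨j, rfl⟩ : ∃ j', j = j' + 1 := ⟨j - 1, by omega⟩
  have hcount := fun i (hi : i ≤ k) => card_filter_letterPos_lt_right h (by omega) hkN hi hv.1 hv.2
  exact (mem_letterPos_right ⟨by omega, by omega⟩ hkN).1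
    ((mem_iff_mem_of_card_filter_lt (hcount j (by omega)) (hcount (j + 1) hjk)).2
      ((mem_letterPos_right ⟨hj, hjk⟩ (by omega)).2 rfl))

theorem left_entry_eq_diag (h : IsITA 2 N f) {j : ℕ} (hj : 1 ≤ j) (hjk : j ≤ k) (hkN : k ≤ N) :
    f 1 j k = f 1 j j := by
  induction k, hjk using Nat.le_induction with
  | base => rfl
  | succ k hjk ih => rw [left_entry_succ h hkN hj hjk, ih (by omega)]

theorem right_entry_eq (h : IsITA 2 N f) {j : ℕ} (hj : 1 ≤ j) (hjk : j ≤ k) (hkN : k ≤ N) :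
    f 2 j k = f 2 1 (k + 1 - j) := by
  induction j, hj using Nat.le_induction generalizing k with
  | base => simp
  | succ j hj ih =>
    obtain ⟨k, rfl⟩ : ∃ k', k = k' + 1 := ⟨k - 1, by omega⟩
    rw [right_entry_succ h hkN hj (by omega), ih (by omega) (by omega)]
    congr 1
    omega

theorem middle_entries_ne (h : IsITA 2 N f) (hk : 1 ≤ k) (hkN : k ≤ N) : f 1 k k ≠ f 2 1 k := by
  intro heq
  rcases (by omega : k = 1 ∨ 2 ≤ k) with rfl | hk₂
  · have hv := h.1 1 1 1 ⟨le_rfl, one_le_two, le_rfl, le_rfl, hkN⟩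
    have hcount := h.2.2.1 1 le_rfl hkN (f 1 1 1) hv.1 hv.2
    rw [show Icc 1 2 ×ˢ Icc 1 1 = {(1, 1), (2, 1)} by decide] at hcount
    simp [filter_insert, ← heq] at hcount
  · -- No position of row `k - 1` lies in `[N + k, 2 * N + 1)`.
    obtain ⟨k, rfl⟩ : ∃ k', k = k' + 1 + 1 := ⟨k - 2, by omega⟩
    obtain ⟨i, j, hi₁, hi₂, hj₁, hj₂, -, hlo, hhi⟩ :=
      h.2.2.2 (k + 1 + 1) (by omega) hkN 1 (k + 1 + 1) 2 1 le_rfl one_le_two (by omega) le_rfl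
        one_le_two le_rfl le_rfl (by omega) heq (hCoord_lt_hCoord_iff.2 (by omega))
    rw [Nat.add_sub_cancel] at hj₂ hlo hhi
    have hlo' := hCoord_succ_lt_hCoord_iff.1 hlo
    have hhi' := hCoord_lt_hCoord_succ_iff.1 hhi
    rcases (by omega : i = 1 ∨ i = 2) with rfl | rfl <;> omega

end RankTwo

theorem card_filter_eq_of_reflect {k a : ℕ} (g : ℕ → ℕ → ℕ)
    (hg : ∀ i j, 1 ≤ i → i ≤ 2 → 1 ≤ j → j ≤ k →
      (g i j = 1 ∨ g i j = 2) ∧ g (3 - i) (k + 1 - j) = 3 - g i j)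
    (ha : a = 1 ∨ a = 2) : #{p ∈ Icc 1 2 ×ˢ Icc 1 k | g p.1 p.2 = a} = k := by
  have hswap : #{p ∈ Icc 1 2 ×ˢ Icc 1 k | g p.1 p.2 = a} =
      #{p ∈ Icc 1 2 ×ˢ Icc 1 k | ¬g p.1 p.2 = a} := by
    refine card_nbij' (fun p => (3 - p.1, k + 1 - p.2)) (fun p => (3 - p.1, k + 1 - p.2))
      ?_ ?_ ?_ ?_ <;> rintro ⟨i, j⟩ hp <;>
      simp only [coe_filter, mem_product, mem_Icc, Set.mem_ofPred_eq] at hp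
    · have := hg i j hp.1.1.1 hp.1.1.2 hp.1.2.1 hp.1.2.2
      simp only [coe_filter, mem_product, mem_Icc, Set.mem_ofPred_eq]
      omega
    · have := hg i j hp.1.1.1 hp.1.1.2 hp.1.2.1 hp.1.2.2
      simp only [coe_filter, mem_product, mem_Icc, Set.mem_ofPred_eq]
      omega
    · simp only [Prod.mk.injEq]
      omega
    · simp only [Prod.mk.injEq]
      omega
  have htotal := card_filter_add_card_filter_not (s := Icc 1 2 ×ˢ Icc 1 k) fun p => g p.1 p.2 = a
  rw [card_product, Nat.card_Icc, Nat.card_Icc] at htotal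
  omega

/-- The rank-two array whose diagonal entry `T^{(1)}_{m,m}` is `1` exactly for `m ∈ s`. -/
def rankTwoArray (N : ℕ) (s : Finset ℕ) (i j k : ℕ) : ℕ :=
  if 1 ≤ i ∧ i ≤ 2 ∧ 1 ≤ j ∧ j ≤ k ∧ k ≤ N then
    if i = 1 then (if j ∈ s then 1 else 2) else (if k + 1 - j ∈ s then 2 else 1)
  else 0

section RankTwoArray

variable {N : ℕ} {s : Finset ℕ} {j k : ℕ}

theorem rankTwoArray_one (hj : 1 ≤ j) (hjk : j ≤ k) (hkN : k ≤ N) :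
    rankTwoArray N s 1 j k = if j ∈ s then 1 else 2 := by
  simp [rankTwoArray, hj, hjk, hkN]

theorem rankTwoArray_two (hj : 1 ≤ j) (hjk : j ≤ k) (hkN : k ≤ N) :
    rankTwoArray N s 2 j k = if k + 1 - j ∈ s then 2 else 1 := by
  simp [rankTwoArray, hj, hjk, hkN]

theorem rankTwoArray_mem {i : ℕ} (hi₁ : 1 ≤ i) (hi₂ : i ≤ 2) (hj : 1 ≤ j) (hjk : j ≤ k)
    (hkN : k ≤ N) : rankTwoArray N s i j k = 1 ∨ rankTwoArray N s i j k = 2 := by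
  rcases (by omega : i = 1 ∨ i = 2) with rfl | rfl
  · rw [rankTwoArray_one hj hjk hkN]; split_ifs <;> simp
  · rw [rankTwoArray_two hj hjk hkN]; split_ifs <;> simp

theorem rankTwoArray_reflect {i : ℕ} (hi₁ : 1 ≤ i) (hi₂ : i ≤ 2) (hj : 1 ≤ j) (hjk : j ≤ k)
    (hkN : k ≤ N) : rankTwoArray N s (3 - i) (k + 1 - j) k = 3 - rankTwoArray N s i j k := by
  rcases (by omega : i = 1 ∨ i = 2) with rfl | rfl
  · rw [rankTwoArray_two (by omega) (by omega) hkN, rankTwoArray_one hj hjk hkN,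
      show k + 1 - (k + 1 - j) = j by omega]
    split_ifs <;> rfl
  · rw [rankTwoArray_one (by omega) (by omega) hkN, rankTwoArray_two hj hjk hkN]
    split_ifs <;> rfl

theorem rankTwoArray_interlacing (s : Finset ℕ) (hkN : k + 1 ≤ N) {i j i' j' : ℕ}
    (hi₁ : 1 ≤ i) (hi₂ : i ≤ 2) (hj₁ : 1 ≤ j) (hj₂ : j ≤ k + 1)
    (hi'₁ : 1 ≤ i') (hi'₂ : i' ≤ 2) (hj'₁ : 1 ≤ j') (hj'₂ : j' ≤ k + 1)
    (heq : rankTwoArray N s i j (k + 1) = rankTwoArray N s i' j' (k + 1))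
    (hlt : i * N + j < i' * N + j') :
    ∃ i'' j'', 1 ≤ i'' ∧ i'' ≤ 2 ∧ 1 ≤ j'' ∧ j'' ≤ k ∧
      rankTwoArray N s i'' j'' k = rankTwoArray N s i j (k + 1) ∧
      i * N + j ≤ i'' * N + j'' ∧ i'' * N + j'' < i' * N + j' := by
  by_cases hright : i' = 2 ∧ 2 ≤ j'
  · obtain ⟨rfl, hj'⟩ := hright
    refine ⟨2, j' - 1, one_le_two, le_rfl, by omega, by omega, ?_, by omega, by omega⟩
    rw [heq, rankTwoArray_two (by omega) (by omega) (by omega), rankTwoArray_two hj'₁ hj'₂ hkN,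
      show k + 1 - (j' - 1) = k + 1 + 1 - j' by omega]
  · obtain ⟨rfl, hjk⟩ : i = 1 ∧ j ≤ k := by
      rcases (by omega : i = 1 ∨ i = 2) with rfl | rfl
      · refine ⟨rfl, ?_⟩
        by_contra! hjk
        obtain ⟨rfl, rfl⟩ : i' = 2 ∧ j' = 1 := by
          rcases (by omega : i' = 1 ∨ i' = 2) with rfl | rfl <;> omega
        rw [rankTwoArray_one hj₁ hj₂ hkN, rankTwoArray_two le_rfl (by omega) hkN,
          Nat.add_sub_cancel, show j = k + 1 by omega] at heq
        split_ifs at heq <;> simp at heq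
      · rcases (by omega : i' = 1 ∨ i' = 2) with rfl | rfl <;> omega
    exact ⟨1, j, le_rfl, one_le_two, hj₁, hjk, by rw [rankTwoArray_one hj₁ hjk (by omega),
      rankTwoArray_one hj₁ hj₂ hkN], le_rfl, hlt⟩

theorem isITA_rankTwoArray (s : Finset ℕ) : IsITA 2 N (rankTwoArray N s) := by
  refine ⟨fun i j k ⟨hi₁, hi₂, hj, hjk, hkN⟩ => ?_, fun i j k hc => if_neg hc,
    fun k hk hkN a ha₁ ha₂ => ?_,
    fun k hk hkN i j i' j' hi₁ hi₂ hj₁ hj₂ hi'₁ hi'₂ hj'₁ hj'₂ heq hlt => ?_⟩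
  · have := rankTwoArray_mem (s := s) hi₁ hi₂ hj hjk hkN
    omega
  · exact card_filter_eq_of_reflect _ (fun i j hi₁ hi₂ hj hjk =>
      ⟨rankTwoArray_mem hi₁ hi₂ hj hjk hkN, rankTwoArray_reflect hi₁ hi₂ hj hjk hkN⟩) (by omega)
  · obtain ⟨k, rfl⟩ : ∃ k', k = k' + 1 := ⟨k - 1, by omega⟩
    obtain ⟨i'', j'', hi''₁, hi''₂, hj''₁, hj''₂, hv, hlo, hhi⟩ :=
      rankTwoArray_interlacing s hkN hi₁ hi₂ hj₁ hj₂ hi'₁ hi'₂ hj'₁ hj'₂ heq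
        (hCoord_lt_hCoord_iff.1 hlt)
    rw [Nat.add_sub_cancel]
    exact ⟨i'', j'', hi''₁, hi''₂, hj''₁, hj''₂, hv, hCoord_succ_lt_hCoord_iff.2 hlo,
      hCoord_lt_hCoord_succ_iff.2 hhi⟩

theorem filter_rankTwoArray_diag_eq (hs : s ⊆ Icc 1 N) :
    {m ∈ Icc 1 N | rankTwoArray N s 1 m m = 1} = s := by
  ext m
  simp only [mem_filter, mem_Icc]
  constructor
  · rintro ⟨⟨hm₁, hm₂⟩, hm⟩
    rw [rankTwoArray_one hm₁ le_rfl hm₂] at hm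
    split_ifs at hm with hms
    · exact hms
    · omega
  · intro hm
    have hmN := mem_Icc.1 (hs hm)
    exact ⟨hmN, by rw [rankTwoArray_one hmN.1 le_rfl hmN.2, if_pos hm]⟩

end RankTwoArray

theorem eq_rankTwoArray {N : ℕ} {f : ℕ → ℕ → ℕ → ℕ} (h : IsITA 2 N f) :
    f = rankTwoArray N {m ∈ Icc 1 N | f 1 m m = 1} := by
  funext i j k
  by_cases hc : 1 ≤ i ∧ i ≤ 2 ∧ 1 ≤ j ∧ j ≤ k ∧ k ≤ N
  · obtain ⟨hi₁, hi₂, hj, hjk, hkN⟩ := hc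
    rcases (by omega : i = 1 ∨ i = 2) with rfl | rfl
    · have hv := h.1 1 j j ⟨le_rfl, one_le_two, hj, le_rfl, by omega⟩
      rw [rankTwoArray_one hj hjk hkN, left_entry_eq_diag h hj hjk hkN]
      split_ifs with hm <;> simp only [mem_filter, mem_Icc] at hm <;> omega
    · have hv := h.1 1 (k + 1 - j) (k + 1 - j) ⟨le_rfl, one_le_two, by omega, le_rfl, by omega⟩
      have hv' := h.1 2 1 (k + 1 - j) ⟨one_le_two, le_rfl, le_rfl, by omega, by omega⟩
      have hne := middle_entries_ne h (k := k + 1 - j) (by omega) (by omega)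
      rw [rankTwoArray_two hj hjk hkN, right_entry_eq h hj hjk hkN]
      split_ifs with hm <;> simp only [mem_filter, mem_Icc] at hm <;> omega
  · rw [h.2.1 i j k hc, rankTwoArray, if_neg hc]

theorem card_ITA_rank_two_general (N : ℕ) :
    {f : ℕ → ℕ → ℕ → ℕ | IsITA 2 N f}.ncard = 2 ^ N := by
  have hset : {f : ℕ → ℕ → ℕ → ℕ | IsITA 2 N f} = rankTwoArray N '' (Icc 1 N).powerset := by
    ext f
    constructor
    · exact fun h => ⟨_, mem_powerset.2 (filter_subset _ _), (eq_rankTwoArray h).symm⟩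
    · rintro ⟨s, -, rfl⟩
      exact isITA_rankTwoArray s
  have hinj : Set.InjOn (rankTwoArray N) (Icc 1 N).powerset := fun s hs t ht hst => by
    rw [← filter_rankTwoArray_diag_eq (mem_powerset.1 hs),
      ← filter_rankTwoArray_diag_eq (mem_powerset.1 ht), hst]
  rw [hset, hinj.ncard_image, Set.ncard_coe_finset, card_powerset, Nat.card_Icc,
    Nat.add_sub_cancel]

/-- the number of interlacing triangular arrays of rank `2` and
height `N` equals `2^N`. -/
theorem card_ITA_rank_two (N : ℕ) (hN : 1 ≤ N) :
    {f : ℕ → ℕ → ℕ → ℕ | IsITA 2 N f}.ncard = 2 ^ N :=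
  card_ITA_rank_two_general N
end
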